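/- arXiv:0802.4281 — 2 statements merged into one kernel-verified Lean document; each statement's English description precedes it below -/
import Mathlib

section
/- With E(t) = −[(e^{−2t}−3)² − (e^{2t}−3)²]/[(e^{2t}−3)² + (e^{−2t}−3)²] · (1 − 12e^{2t}/(1+e^{2t})²), the function K(s) = −∫₀^s E(t) dt equals (1/2)·ln[ 8e^{2s}((1−3e^{2s})² + e^{4s}(e^{2s}−3)²) / (e^{2s}+1)⁶ ] for all s ∈ ℝ. -/
/-!
In the variable x = e^{2t} the integrand is a rational function, and
½ log (8x q(x) / (x+1)⁶) with q(x) = (1 - 3x)² + x²(x - 3)² is an antiderivative of it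
up to sign; q has no real zeros, so everything is smooth, and since the closed form vanishes
at s = 0 the fundamental theorem of calculus gives the identity.
-/

open Real

noncomputable def contractionRate (t : ℝ) : ℝ :=
  -(((exp (-(2 * t)) - 3) ^ 2 - (exp (2 * t) - 3) ^ 2) /
    ((exp (2 * t) - 3) ^ 2 + (exp (-(2 * t)) - 3) ^ 2)) *
    (1 - 12 * exp (2 * t) / (1 + exp (2 * t)) ^ 2)

noncomputable def contractionPotential (s : ℝ) : ℝ :=
  1 / 2 * log (8 * exp (2 * s) *
    ((1 - 3 * exp (2 * s)) ^ 2 + exp (4 * s) * (exp (2 * s) - 3) ^ 2) / (exp (2 * s) + 1) ^ 6)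

def quartic (x : ℝ) : ℝ := (1 - 3 * x) ^ 2 + x ^ 2 * (x - 3) ^ 2

-- `1 - 3x` and `x (x - 3)` have no common zero.
theorem quartic_pos (x : ℝ) : 0 < quartic x := by
  unfold quartic
  nlinarith [sq_nonneg (1 - 3 * x), sq_nonneg (x * (x - 3)), sq_nonneg (x - 1/3)]

-- `contractionRate t` in the variable `x = e^{2t}`, using `(e^{-2t} - 3)² = (1 - 3x)² / x²`.
noncomputable def rationalRate (x : ℝ) : ℝ :=
  (x ^ 2 * (x - 3) ^ 2 - (1 - 3 * x) ^ 2) / quartic x * ((1 - 10 * x + x ^ 2) / (1 + x) ^ 2)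

theorem contractionRate_eq_rationalRate (t : ℝ) :
    contractionRate t = rationalRate (exp (2 * t)) := by
  have hx : exp (2 * t) ≠ 0 := (exp_pos _).ne'
  have hq := (quartic_pos (exp (2 * t))).ne'
  unfold contractionRate rationalRate quartic at *
  rw [exp_neg]
  field_simp
  ring

theorem continuous_contractionRate : Continuous contractionRate := by
  rw [funext contractionRate_eq_rationalRate]
  unfold rationalRate
  have hquartic : Continuous quartic := by unfold quartic; fun_prop
  exact ((Continuous.div (by fun_prop) (by fun_prop) fun t => (quartic_pos _).ne').mul
    (Continuous.div (by fun_prop) (by fun_prop) fun t => by positivity))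

theorem hasDerivAt_half_log (x : ℝ) (hx : 0 < x) :
    HasDerivAt (fun y => 1 / 2 * log (8 * y * quartic y / (y + 1) ^ 6))
      (-rationalRate x / (2 * x)) x := by
  have hq := quartic_pos x
  have hquartic : HasDerivAt quartic
      (-6 * (1 - 3 * x) + 2 * x * (x - 3) ^ 2 + 2 * x ^ 2 * (x - 3)) x :=
    ((((hasDerivAt_id' x).const_mul 3).const_sub 1).pow 2 |>.add
      (((hasDerivAt_id' x).pow 2).mul (((hasDerivAt_id' x).sub_const 3).pow 2))).congr_deriv
      (by simp only [Pi.pow_apply]; ring)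
  have hnum := ((hasDerivAt_id' x).const_mul 8).mul hquartic
  have hden := ((hasDerivAt_id' x).add_const 1).pow 6
  have hx1 : x + 1 ≠ 0 := by positivity
  refine (((hnum.div hden (by simp only [Pi.pow_apply]; positivity)).log
    (by simp only [Pi.mul_apply, Pi.div_apply, Pi.pow_apply]; positivity)).const_mul
      (1 / 2)).congr_deriv ?_
  simp only [Pi.mul_apply, Pi.div_apply, Pi.pow_apply]
  unfold rationalRate quartic at *
  field_simp
  ring

theorem hasDerivAt_contractionPotential (t : ℝ) :
    HasDerivAt contractionPotential (-contractionRate t) t := by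
  have hexp : HasDerivAt (fun s => exp (2 * s)) (2 * exp (2 * t)) t := by
    simpa [mul_comm] using ((hasDerivAt_id t).const_mul 2).exp
  have hpot : contractionPotential = fun s =>
      (fun y => 1 / 2 * log (8 * y * quartic y / (y + 1) ^ 6)) (exp (2 * s)) := by
    funext s
    simp only [contractionPotential, quartic]
    rw [show 4 * s = 2 * s + 2 * s by ring, exp_add, ← sq]
  rw [hpot, contractionRate_eq_rationalRate]
  exact ((hasDerivAt_half_log _ (exp_pos (2 * t))).comp t hexp).congr_deriv
    (div_mul_cancel₀ _ (mul_ne_zero two_ne_zero (exp_pos _).ne'))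

theorem contractionPotential_zero : contractionPotential 0 = 0 := by
  norm_num [contractionPotential]

/-- K(s) = −∫₀^s E(t) dt has the closed form
(1/2)·ln[8e^{2s}((1−3e^{2s})² + e^{4s}(e^{2s}−3)²)/(e^{2s}+1)⁶]. -/
theorem stmt5 :
    let E : ℝ → ℝ := fun t =>
      -(((Real.exp (-(2 * t)) - 3)^2 - (Real.exp (2 * t) - 3)^2) /
        ((Real.exp (2 * t) - 3)^2 + (Real.exp (-(2 * t)) - 3)^2)) *
        (1 - 12 * Real.exp (2 * t) / (1 + Real.exp (2 * t))^2)
    ∀ s : ℝ,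
      -(∫ t in (0:ℝ)..s, E t) =
        (1/2) * Real.log (8 * Real.exp (2 * s) *
          ((1 - 3 * Real.exp (2 * s))^2 + Real.exp (4 * s) * (Real.exp (2 * s) - 3)^2) /
          (Real.exp (2 * s) + 1)^6) := by
  intro E s
  have hFTC := intervalIntegral.integral_eq_sub_of_hasDerivAt
    (fun t _ => hasDerivAt_contractionPotential t)
    (continuous_contractionRate.neg.intervalIntegrable 0 s)
  rw [intervalIntegral.integral_neg, contractionPotential_zero, sub_zero] at hFTC
  exact hFTC
end

section
/- ∫_{−∞}^{∞} (u(s)+v(s))·(a(s)+b(s))²·(b(s)−a(s))·e^{K(s)} ds = 16/15, where a(s) = 2√2 e^{3s}/(1+e^{2s})², b(s) = 2√2 e^{s}/(1+e^{2s})², u(s) = −(e^{2s}−3)/√((e^{2s}−3)²+(e^{−2s}−3)²), v(s) = (e^{−2s}−3)/√((e^{2s}−3)²+(e^{−2s}−3)²), and e^{K(s)} = √(8e^{2s}((1−3e^{2s})² + e^{4s}(e^{2s}−3)²))/(e^{2s}+1)³. -/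
/-!
Writing `E = exp s`, the radicand of `eK` is `(2√2 E³)²` times the common radicand of `u` and `v`,
so the square roots cancel and the integrand collapses to `4 tanh² s (1 - tanh² s)²`, i.e.
`4 tanh² s sech⁴ s`. This is the derivative of `4 (tanh³ s / 3 - tanh⁵ s / 5)`, which increases
from `-8/15` to `8/15`; being a nonnegative derivative of a function with finite limits, it is
automatically integrable.
-/

open MeasureTheory Set Filter Topology

namespace Real

theorem tanh_eq_exp_sq (x : ℝ) : tanh x = (exp x ^ 2 - 1) / (exp x ^ 2 + 1) := by
  rw [tanh_eq_sinh_div_cosh, sinh_eq, cosh_eq, exp_neg]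
  field_simp

theorem hasDerivAt_tanh (x : ℝ) : HasDerivAt tanh (1 - tanh x ^ 2) x := by
  rw [show tanh = sinh / cosh from funext tanh_eq_sinh_div_cosh]
  refine ((hasDerivAt_sinh x).div (hasDerivAt_cosh x) (cosh_pos x).ne').congr_deriv ?_
  have := (cosh_pos x).ne'
  rw [Pi.div_apply]
  field_simp

theorem tendsto_tanh_atTop : Tendsto tanh atTop (𝓝 1) := by
  have h : Tendsto (fun x => exp x ^ 2 + 1) atTop atTop :=
    tendsto_atTop_add_const_right _ _ ((tendsto_pow_atTop two_ne_zero).comp tendsto_exp_atTop)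
  have h' := (tendsto_const_nhds (x := (1 : ℝ))).sub
    (tendsto_const_nhds (x := (2 : ℝ)).div_atTop h)
  rw [sub_zero] at h'
  refine h'.congr fun x => ?_
  rw [tanh_eq_exp_sq]
  field_simp
  ring

theorem tendsto_tanh_atBot : Tendsto tanh atBot (𝓝 (-1)) := by
  have h := (tendsto_tanh_atTop.comp tendsto_neg_atBot_atTop).neg
  refine h.congr fun x => ?_
  simp

end Real

theorem integrable_of_hasDerivAt_of_nonneg {g g' : ℝ → ℝ} {m n : ℝ}
    (hderiv : ∀ x, HasDerivAt g (g' x) x) (hg' : ∀ x, 0 ≤ g' x)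
    (hbot : Tendsto g atBot (𝓝 m)) (htop : Tendsto g atTop (𝓝 n)) : Integrable g' := by
  have hint : ∀ a b, IntegrableOn g' (Ioc a b) := fun a b =>
    intervalIntegral.integrableOn_deriv_of_nonneg
      (fun x _ => (hderiv x).continuousAt.continuousWithinAt) (fun x _ => hderiv x)
      (fun x _ => hg' x)
  refine integrable_of_intervalIntegral_norm_tendsto (n - m) (fun i => hint _ _)
    tendsto_neg_atTop_atBot tendsto_id ?_
  refine (htop.sub (hbot.comp tendsto_neg_atTop_atBot)).congr fun i => ?_
  simp only [Function.comp_apply, id, Real.norm_of_nonneg (hg' _)]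
  rw [intervalIntegral.integral_eq_sub_of_hasDerivAt (fun x _ => hderiv x)]
  exact ⟨hint _ _, hint _ _⟩

open Real

theorem hasDerivAt_tanh_pow_three_div_sub_tanh_pow_five_div (x : ℝ) :
    HasDerivAt (fun y => tanh y ^ 3 / 3 - tanh y ^ 5 / 5)
      (tanh x ^ 2 * (1 - tanh x ^ 2) ^ 2) x := by
  refine ((((hasDerivAt_tanh x).pow 3).div_const 3).sub
    (((hasDerivAt_tanh x).pow 5).div_const 5)).congr_deriv ?_
  push_cast
  ring

theorem integral_tanh_sq_mul_one_sub_tanh_sq_sq :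
    ∫ x, tanh x ^ 2 * (1 - tanh x ^ 2) ^ 2 = 4 / 15 := by
  have hbot := ((tendsto_tanh_atBot.pow 3).div_const 3).sub
    ((tendsto_tanh_atBot.pow 5).div_const 5)
  have htop := ((tendsto_tanh_atTop.pow 3).div_const 3).sub
    ((tendsto_tanh_atTop.pow 5).div_const 5)
  rw [integral_of_hasDerivAt_of_tendsto hasDerivAt_tanh_pow_three_div_sub_tanh_pow_five_div
    (integrable_of_hasDerivAt_of_nonneg hasDerivAt_tanh_pow_three_div_sub_tanh_pow_five_div
      (fun x => by positivity) hbot htop) hbot htop]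
  norm_num

theorem sqrt_eight_mul_sq_mul_eq (E : ℝ) (hE : 0 < E) :
    √(8 * E ^ 2 * ((1 - 3 * E ^ 2) ^ 2 + E ^ 4 * (E ^ 2 - 3) ^ 2)) =
      2 * √2 * E ^ 3 * √((E ^ 2 - 3) ^ 2 + ((E ^ 2)⁻¹ - 3) ^ 2) := by
  have hfac : 8 * E ^ 2 * ((1 - 3 * E ^ 2) ^ 2 + E ^ 4 * (E ^ 2 - 3) ^ 2) =
      (2 * √2 * E ^ 3) ^ 2 * ((E ^ 2 - 3) ^ 2 + ((E ^ 2)⁻¹ - 3) ^ 2) := by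
    field_simp
    rw [sq_sqrt zero_le_two]
    ring
  rw [hfac, sqrt_mul (sq_nonneg _), sqrt_sq (by positivity)]

theorem sq_sub_three_add_sq_inv_sub_three_pos (x : ℝ) : 0 < (x - 3) ^ 2 + (x⁻¹ - 3) ^ 2 := by
  rcases eq_or_ne x 3 with rfl | hx
  · norm_num
  · have := sub_ne_zero.mpr hx
    positivity

theorem damping_integrand_eq (E c R : ℝ) (hE : E ≠ 0) (hc : c ^ 2 = 2) (hR : R ≠ 0) :
    (-(E ^ 2 - 3) / R + ((E ^ 2)⁻¹ - 3) / R) *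
        (2 * c * E ^ 3 / (1 + E ^ 2) ^ 2 + 2 * c * E / (1 + E ^ 2) ^ 2) ^ 2 *
        (2 * c * E / (1 + E ^ 2) ^ 2 - 2 * c * E ^ 3 / (1 + E ^ 2) ^ 2) *
        (2 * c * E ^ 3 * R / (E ^ 2 + 1) ^ 3) =
      4 * (((E ^ 2 - 1) / (E ^ 2 + 1)) ^ 2 * (1 - ((E ^ 2 - 1) / (E ^ 2 + 1)) ^ 2) ^ 2) := by
  have : 1 + E ^ 2 ≠ 0 := by positivity
  have : E ^ 2 + 1 ≠ 0 := by positivity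
  have hc4 : c ^ 4 = 4 := by rw [show c ^ 4 = (c ^ 2) ^ 2 by ring, hc]; norm_num
  field_simp
  ring_nf
  rw [hc4]
  ring

/-- The Melnikov damping coefficient:
∫ℝ (u+v)(a+b)²(b−a)e^{K} ds = 16/15, with all functions explicit. -/
theorem stmt14 :
    let a : ℝ → ℝ := fun s => 2 * Real.sqrt 2 * Real.exp (3 * s) / (1 + Real.exp (2 * s))^2
    let b : ℝ → ℝ := fun s => 2 * Real.sqrt 2 * Real.exp s / (1 + Real.exp (2 * s))^2
    let u : ℝ → ℝ := fun s => -(Real.exp (2 * s) - 3) /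
      Real.sqrt ((Real.exp (2 * s) - 3)^2 + (Real.exp (-(2 * s)) - 3)^2)
    let v : ℝ → ℝ := fun s => (Real.exp (-(2 * s)) - 3) /
      Real.sqrt ((Real.exp (2 * s) - 3)^2 + (Real.exp (-(2 * s)) - 3)^2)
    let eK : ℝ → ℝ := fun s =>
      Real.sqrt (8 * Real.exp (2 * s) *
        ((1 - 3 * Real.exp (2 * s))^2 + Real.exp (4 * s) * (Real.exp (2 * s) - 3)^2)) /
        (Real.exp (2 * s) + 1)^3
    ∫ s : ℝ, (u s + v s) * (a s + b s)^2 * (b s - a s) * eK s = 16/15 := by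
  intro a b u v eK
  have hpoint : ∀ s, (u s + v s) * (a s + b s) ^ 2 * (b s - a s) * eK s =
      4 * (tanh s ^ 2 * (1 - tanh s ^ 2) ^ 2) := by
    intro s
    have hpow : ∀ n : ℕ, exp (n * s) = exp s ^ n := fun n => exp_nat_mul s n
    have h2 : exp (2 * s) = exp s ^ 2 := mod_cast hpow 2
    have h3 : exp (3 * s) = exp s ^ 3 := mod_cast hpow 3
    have h4 : exp (4 * s) = exp s ^ 4 := mod_cast hpow 4
    simp only [a, b, u, v, eK, h2, h3, h4, exp_neg, sqrt_eight_mul_sq_mul_eq _ (exp_pos s),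
      tanh_eq_exp_sq]
    exact damping_integrand_eq _ _ _ (exp_pos s).ne' (sq_sqrt zero_le_two)
      (sqrt_pos.mpr (sq_sub_three_add_sq_inv_sub_three_pos _)).ne'
  simp only [hpoint, integral_const_mul, integral_tanh_sq_mul_one_sub_tanh_sq_sq]
  norm_num
end
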